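/- Let A be an integrable real-valued random variable, B a real-valued random variable, C a random variable with values in a measurable space, and δ > 0. If 𝔼[A | B, C] = B almost surely, then rnd_δ(B) ≤ 𝔼[A | rnd_δ(B), C] ≤ rnd_δ(B) + δ almost surely. -/

import Mathlib

/-!
Rounding is a function of `B`, so the σ-algebra of `(rnd_δ B, C)` is coarser than that of
`(B, C)`, and the tower property gives `𝔼[A | rnd_δ B, C] = 𝔼[B | rnd_δ B, C]`. Since
`rnd_δ B ≤ B ≤ rnd_δ B + δ` and both bounds are measurable for the coarser σ-algebra,
monotonicity of conditional expectation sandwiches `𝔼[B | rnd_δ B, C]` between them.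
-/

open MeasureTheory

lemma MeasurableSpace.comap_comp_le {α β γ : Type*} [mβ : MeasurableSpace β]
    [mγ : MeasurableSpace γ] {f : α → β} {g : β → γ} (hg : Measurable g) :
    mγ.comap (g ∘ f) ≤ mβ.comap f := by
  rw [← MeasurableSpace.comap_comp]
  exact MeasurableSpace.comap_mono hg.comap_le

section Sandwich

variable {Ω : Type*} {m m₀ : MeasurableSpace Ω} {μ : Measure Ω} {f g : Ω → ℝ}

lemma ae_le_condExp_of_ae_le (hm : m ≤ m₀) [SigmaFinite (μ.trim hm)]
    (hg : StronglyMeasurable[m] g) (hgi : Integrable g μ) (hfi : Integrable f μ)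
    (hgf : g ≤ᵐ[μ] f) : g ≤ᵐ[μ] μ[f | m] := by
  simpa only [condExp_of_stronglyMeasurable hm hg hgi] using condExp_mono (m := m) hgi hfi hgf

lemma condExp_ae_le_of_ae_le (hm : m ≤ m₀) [SigmaFinite (μ.trim hm)]
    (hg : StronglyMeasurable[m] g) (hgi : Integrable g μ) (hfi : Integrable f μ)
    (hfg : f ≤ᵐ[μ] g) : μ[f | m] ≤ᵐ[μ] g := by
  simpa only [condExp_of_stronglyMeasurable hm hg hgi] using condExp_mono (m := m) hfi hgi hfg

end Sandwich

section Rounding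

variable {δ : ℝ}

lemma mul_floor_div_le (hδ : 0 < δ) (x : ℝ) : δ * ⌊x / δ⌋ ≤ x := by
  linarith [Int.sub_floor_div_mul_nonneg x hδ, mul_comm δ (⌊x / δ⌋ : ℝ)]

lemma le_mul_floor_div_add (hδ : 0 < δ) (x : ℝ) : x ≤ δ * ⌊x / δ⌋ + δ := by
  linarith [Int.sub_floor_div_mul_lt x hδ, mul_comm δ (⌊x / δ⌋ : ℝ)]

lemma measurable_mul_floor_div (δ : ℝ) : Measurable fun x : ℝ => δ * (⌊x / δ⌋ : ℝ) :=
  measurable_const.mul (measurable_from_top.comp (measurable_id.div_const δ).floor)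

lemma MeasureTheory.Integrable.mul_floor_div {Ω : Type*} [MeasurableSpace Ω] {μ : Measure Ω}
    [IsFiniteMeasure μ] {B : Ω → ℝ} (hB : Integrable B μ) (hδ : 0 < δ) :
    Integrable (fun ω => δ * (⌊B ω / δ⌋ : ℝ)) μ := by
  refine (hB.abs.add (integrable_const δ)).mono'
    ((measurable_mul_floor_div δ).comp_aemeasurable hB.aemeasurable).aestronglyMeasurable
    (Filter.Eventually.of_forall fun ω => ?_)
  have := mul_floor_div_le hδ (B ω)
  have := le_mul_floor_div_add hδ (B ω)
  rw [Real.norm_eq_abs, abs_le]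
  constructor <;> simp only [Pi.add_apply] <;> linarith [le_abs_self (B ω), neg_abs_le (B ω)]

end Rounding

theorem condexp_rounded
    {Ω γ : Type*} [MeasurableSpace Ω] [MeasurableSpace γ]
    (μ : Measure Ω) [IsProbabilityMeasure μ]
    (A : Ω → ℝ)
    (B : Ω → ℝ) (hB : Measurable B)
    (C : Ω → γ) (hC : Measurable C)
    (δ : ℝ) (hδ : 0 < δ)
    (hcond : μ[A | MeasurableSpace.comap (fun ω => (B ω, C ω)) inferInstance]
      =ᵐ[μ] B) :
    ∀ᵐ ω ∂μ,
      δ * (⌊B ω / δ⌋ : ℝ)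
          ≤ (μ[A | MeasurableSpace.comap
              (fun ω => (δ * (⌊B ω / δ⌋ : ℝ), C ω)) inferInstance]) ω ∧
        (μ[A | MeasurableSpace.comap
            (fun ω => (δ * (⌊B ω / δ⌋ : ℝ), C ω)) inferInstance]) ω
          ≤ δ * (⌊B ω / δ⌋ : ℝ) + δ := by
  set R : Ω → ℝ := fun ω => δ * (⌊B ω / δ⌋ : ℝ)
  have hBi : Integrable B μ := integrable_condExp.congr hcond
  have hRi : Integrable R μ := hBi.mul_floor_div hδ
  set mBC : MeasurableSpace Ω := MeasurableSpace.comap (fun ω => (B ω, C ω)) inferInstance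
  set mRC : MeasurableSpace Ω := MeasurableSpace.comap (fun ω => (R ω, C ω)) inferInstance
  have hmBC : mBC ≤ _ := (hB.prodMk hC).comap_le
  have hmRC : mRC ≤ mBC :=
    MeasurableSpace.comap_comp_le (f := fun ω => (B ω, C ω))
      ((measurable_mul_floor_div δ).comp measurable_fst |>.prodMk measurable_snd)
  have hR : StronglyMeasurable[mRC] R :=
    (measurable_fst.comp (comap_measurable _)).stronglyMeasurable
  have htower : μ[A | mRC] =ᵐ[μ] μ[B | mRC] :=
    (condExp_condExp_of_le hmRC hmBC).symm.trans (condExp_congr_ae hcond)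
  have hlow : R ≤ᵐ[μ] μ[B | mRC] :=
    ae_le_condExp_of_ae_le (hmRC.trans hmBC) hR hRi hBi
      (Filter.Eventually.of_forall (mul_floor_div_le hδ <| B ·))
  have hup : μ[B | mRC] ≤ᵐ[μ] fun ω => R ω + δ :=
    condExp_ae_le_of_ae_le (hmRC.trans hmBC) (hR.add stronglyMeasurable_const)
      (hRi.add (integrable_const δ)) hBi
      (Filter.Eventually.of_forall (le_mul_floor_div_add hδ <| B ·))
  filter_upwards [htower, hlow, hup] with ω hAB hl hu
  exact ⟨hAB ▸ hl, hAB ▸ hu⟩
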